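/- Let (V, μ, α) be a multiplicative Hom-Jordan algebra over a field F. If D₁ lies in the α^k-centroid C_{α^k}(V) and D₂ is an α^s-derivation of V (k, s ≥ 0), then the composition D₁ ∘ D₂ is an α^(k+s)-derivation of V. -/
import Mathlib


/-- `D` is an `α^k`-derivation of the Hom-Jordan algebra `(V, μ, α)`. -/
def IsDer {F V : Type*} [Field F] [AddCommGroup V] [Module F V]
    (μ : V →ₗ[F] V →ₗ[F] V) (α : V →ₗ[F] V) (k : ℕ) (D : V →ₗ[F] V) : Prop :=
  D ∘ₗ α = α ∘ₗ D ∧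
    ∀ x y : V, D (μ x y) = μ (D x) ((α ^ k) y) + μ ((α ^ k) x) (D y)

/-- `D` lies in the `α^k`-centroid of the Hom-Jordan algebra `(V, μ, α)`. -/
def InCentroid {F V : Type*} [Field F] [AddCommGroup V] [Module F V]
    (μ : V →ₗ[F] V →ₗ[F] V) (α : V →ₗ[F] V) (k : ℕ) (D : V →ₗ[F] V) : Prop :=
  D ∘ₗ α = α ∘ₗ D ∧ ∀ x y : V,
    μ (D x) ((α ^ k) y) = D (μ x y) ∧ μ ((α ^ k) x) (D y) = D (μ x y)

theorem stmt9 {F V : Type*} [Field F] [AddCommGroup V] [Module F V]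
    (μ : V →ₗ[F] V →ₗ[F] V) (α : V →ₗ[F] V)
    (hcomm : ∀ x y : V, μ x y = μ y x)
    (hJ : ∀ x y : V, μ (α (α x)) (μ y (μ x x)) = μ (μ (α x) y) (α (μ x x)))
    (hmult : ∀ x y : V, α (μ x y) = μ (α x) (α y))
    (k s : ℕ) (D₁ D₂ : V →ₗ[F] V)
    (h₁ : InCentroid μ α k D₁) (h₂ : IsDer μ α s D₂) :
    IsDer μ α (k + s) (D₁ ∘ₗ D₂) := by
  obtain ⟨hc₁, hcent⟩ := h₁
  obtain ⟨hc₂, hder⟩ := h₂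
  constructor
  · calc (D₁ ∘ₗ D₂) ∘ₗ α = D₁ ∘ₗ (D₂ ∘ₗ α) := by rw [LinearMap.comp_assoc]
    _ = D₁ ∘ₗ (α ∘ₗ D₂) := by rw [hc₂]
    _ = (D₁ ∘ₗ α) ∘ₗ D₂ := by rw [← LinearMap.comp_assoc]
    _ = α ∘ₗ (D₁ ∘ₗ D₂) := by rw [hc₁, LinearMap.comp_assoc]
  · intro x y
    have hpow : (α ^ (k + s) : V →ₗ[F] V) = (α ^ k) ∘ₗ (α ^ s) := by
      rw [pow_add]; rfl
    simp only [LinearMap.comp_apply, hpow]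
    rw [hder, map_add, (hcent (D₂ x) ((α ^ s) y)).1.symm,
      (hcent ((α ^ s) x) (D₂ y)).2.symm]
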